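/- arXiv:1703.04410 — 2 statements merged into one kernel-verified Lean document; each statement's English description precedes it below -/
import Mathlib

section
/- For finite simple graphs G₁, G₂ on [d], the polytope Γ(𝒬_{Ĝ₁}, 𝒬_{Ĝ₂}) ⊂ ℝ^{d+1} equals conv((Γ(𝒬_{G₁}, 𝒬_{G₂}) × {0}) ∪ {e_{d+1}, −e_{d+1}}). -/
open Pointwise

/-- A subset `W` of the vertex set is stable (independent) in `G`. -/
def isStable {d : ℕ} (G : SimpleGraph (Fin d)) (W : Set (Fin d)) : Prop :=
  ∀ i ∈ W, ∀ j ∈ W, i ≠ j → ¬ G.Adj i j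

/-- The indicator vector `ρ(W) ∈ ℝ^d` of a subset `W ⊆ [d]`. -/
noncomputable def rho {d : ℕ} (W : Set (Fin d)) : Fin d → ℝ :=
  W.indicator 1

/-- The stable set polytope of `G`. -/
noncomputable def stablePolytope {d : ℕ} (G : SimpleGraph (Fin d)) : Set (Fin d → ℝ) :=
  convexHull ℝ {x | ∃ W : Set (Fin d), isStable G W ∧ x = rho W}

/-- `Γ(𝒫,𝒬) = conv(𝒫 ∪ (-𝒬))`. -/
noncomputable def GammaPoly {d : ℕ} (P Q : Set (Fin d → ℝ)) : Set (Fin d → ℝ) :=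
  convexHull ℝ (P ∪ (-Q))

/-- The suspension `Ĝ` of a graph `G` on `[d]`. -/
def suspension {d : ℕ} (G : SimpleGraph (Fin d)) : SimpleGraph (Fin (d + 1)) :=
  SimpleGraph.fromRel
    (fun x y =>
      (∃ i j : Fin d, G.Adj i j ∧ x = Fin.castSucc i ∧ y = Fin.castSucc j) ∨
        x = Fin.last d ∨ y = Fin.last d)

/-- Snoc with 0 as a linear map. -/
noncomputable def snocL (d : ℕ) : (Fin d → ℝ) →ₗ[ℝ] (Fin (d + 1) → ℝ) where
  toFun x := Fin.snoc x 0
  map_add' x y := by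
    funext i
    refine Fin.lastCases ?_ ?_ i <;> simp
  map_smul' c x := by
    funext i
    refine Fin.lastCases ?_ ?_ i <;> simp

lemma rho_last {d : ℕ} : rho ({Fin.last d} : Set (Fin (d + 1))) = Pi.single (Fin.last d) (1 : ℝ) := by
  funext i
  by_cases h : i = Fin.last d <;>
    simp [rho, Set.indicator, h, Pi.single_apply]

lemma rho_castSucc_image {d : ℕ} (W : Set (Fin d)) :
    rho (Fin.castSucc '' W) = Fin.snoc (rho W) (0 : ℝ) := by
  funext i
  refine Fin.lastCases ?_ ?_ i
  · have : Fin.last d ∉ Fin.castSucc '' W := by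
      rintro ⟨j, -, hj⟩
      exact absurd hj (Fin.castSucc_lt_last j).ne
    simp [rho, Set.indicator, this]
  · intro j
    have : Fin.castSucc j ∈ Fin.castSucc '' W ↔ j ∈ W :=
      (Fin.castSucc_injective d).mem_set_image
    by_cases h : j ∈ W <;> simp [rho, Set.indicator, this, h]

/-- Vertices of the stable set polytope of the suspension. -/
lemma susp_verts {d : ℕ} (G : SimpleGraph (Fin d)) :
    {x | ∃ W : Set (Fin (d + 1)), isStable (suspension G) W ∧ x = rho W} =
      (fun x : Fin d → ℝ => Fin.snoc x (0 : ℝ)) ''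
          {x | ∃ W : Set (Fin d), isStable G W ∧ x = rho W} ∪
        {Pi.single (Fin.last d) (1 : ℝ)} := by
  ext x
  constructor
  · rintro ⟨W, hW, rfl⟩
    by_cases hl : Fin.last d ∈ W
    · right
      have : W = {Fin.last d} := by
        ext y
        constructor
        · intro hy
          by_contra hne
          exact hW y hy (Fin.last d) hl hne
            (by
              rw [suspension, SimpleGraph.fromRel_adj]
              exact ⟨hne, Or.inl (Or.inr (Or.inr rfl))⟩)
        · rintro rfl; exact hl
      simp [this, rho_last]
    · left
      refine ⟨rho (Fin.castSucc ⁻¹' W), ⟨Fin.castSucc ⁻¹' W, ?_, rfl⟩, ?_⟩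
      · intro i hi j hj hij hadj
        refine hW _ hi _ hj (fun h => hij (Fin.castSucc_injective d h)) ?_
        rw [suspension, SimpleGraph.fromRel_adj]
        exact ⟨fun h => hij (Fin.castSucc_injective d h),
          Or.inl (Or.inl ⟨i, j, hadj, rfl, rfl⟩)⟩
      · have hWeq : W = Fin.castSucc '' (Fin.castSucc ⁻¹' W) := by
          ext y
          constructor
          · intro hy
            have hy' : y ≠ Fin.last d := fun h => hl (h ▸ hy)
            refine ⟨y.castPred hy', ?_, by simp⟩
            simpa using hy
          · rintro ⟨z, hz, rfl⟩; exact hz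
        simp only
        rw [← rho_castSucc_image, ← hWeq]
  · rintro (⟨y, ⟨W, hW, rfl⟩, rfl⟩ | hx)
    · refine ⟨Fin.castSucc '' W, ?_, (rho_castSucc_image W).symm⟩
      rintro i hi j hj hij hadj
      rw [suspension, SimpleGraph.fromRel_adj] at hadj
      obtain ⟨a, ha, rfl⟩ := hi
      obtain ⟨b, hb, rfl⟩ := hj
      have hab : a ≠ b := fun h => hij (h ▸ rfl)
      rcases hadj.2 with (⟨i', j', hadj', hi', hj'⟩ | h | h) | (⟨i', j', hadj', hi', hj'⟩ | h | h)
      · obtain rfl : a = i' := Fin.castSucc_injective d hi'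
        obtain rfl : b = j' := Fin.castSucc_injective d hj'
        exact hW a ha b hb hab hadj'
      · exact absurd h (Fin.castSucc_lt_last a).ne
      · exact absurd h (Fin.castSucc_lt_last b).ne
      · obtain rfl : b = i' := Fin.castSucc_injective d hi'
        obtain rfl : a = j' := Fin.castSucc_injective d hj'
        exact hW b hb a ha hab.symm hadj'
      · exact absurd h (Fin.castSucc_lt_last b).ne
      · exact absurd h (Fin.castSucc_lt_last a).ne
    · refine ⟨{Fin.last d}, ?_, ?_⟩
      · rintro i rfl j rfl hij; exact absurd rfl hij
      · rw [Set.mem_singleton_iff] at hx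
        rw [hx, rho_last]

/-- `Γ(𝒬_{Ĝ₁}, 𝒬_{Ĝ₂}) = conv((Γ(𝒬_{G₁}, 𝒬_{G₂}) × {0}) ∪ {e_{d+1}, -e_{d+1}})`. -/
theorem stmt_6 {d : ℕ} (G₁ G₂ : SimpleGraph (Fin d)) :
    GammaPoly (stablePolytope (suspension G₁)) (stablePolytope (suspension G₂)) =
      convexHull ℝ
        ((fun x : Fin d → ℝ => Fin.snoc x (0 : ℝ)) ''
            GammaPoly (stablePolytope G₁) (stablePolytope G₂) ∪
          {Pi.single (Fin.last d) (1 : ℝ), -Pi.single (Fin.last d) (1 : ℝ)}) := by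
  set V₁ := {x | ∃ W : Set (Fin d), isStable G₁ W ∧ x = rho W}
  set V₂ := {x | ∃ W : Set (Fin d), isStable G₂ W ∧ x = rho W}
  have hco : (fun x : Fin d → ℝ => Fin.snoc x (0 : ℝ)) = ⇑(snocL d) := rfl
  rw [hco]
  have himg : ∀ s : Set (Fin d → ℝ),
      ⇑(snocL d) '' convexHull ℝ s = convexHull ℝ (⇑(snocL d) '' s) :=
    fun s => (snocL d).image_convexHull s
  have hneg : ⇑(snocL d) '' (-V₂) = -(⇑(snocL d) '' V₂) := by
    ext y
    simp only [Set.mem_image, Set.mem_neg]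
    constructor
    · rintro ⟨x, hx, rfl⟩
      exact ⟨-x, hx, by simpa using ((snocL d).map_neg (-x)).symm⟩
    · rintro ⟨x, hx, hxy⟩
      exact ⟨-x, by simpa using hx, by rw [map_neg, hxy, neg_neg]⟩
  simp only [GammaPoly, stablePolytope]
  rw [susp_verts, susp_verts, hco, ← convexHull_neg, ← convexHull_neg,
    convexHull_convexHull_union_left, convexHull_convexHull_union_right,
    convexHull_convexHull_union_left, convexHull_convexHull_union_right,
    himg, convexHull_convexHull_union_left]
  congr 1
  rw [Set.image_union] at *
  rw [hneg]
  ext y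
  simp only [Set.mem_union, Set.mem_neg, Set.mem_singleton_iff, Set.mem_insert_iff,
    neg_eq_iff_eq_neg]
  tauto
end

section
/- Let G₁ be a finite simple graph on [d] that contains an odd hole, i.e., an induced cycle C of odd length 2ℓ+1 with ℓ ≥ 2, and let G₂ be any finite simple graph on [d]. Then the lattice polytope Ω(𝒬_{G₁}, 𝒬_{G₂}) ⊂ ℝ^{d+1} does not possess the integer decomposition property: the point a = e_1 + ⋯ + e_{2ℓ+1} + 2e_{d+1} (with the hole's vertices labelled 1,...,2ℓ+1) lies in 3·Ω(𝒬_{G₁}, 𝒬_{G₂}) ∩ ℤ^{d+1} but is not a sum of three lattice points of Ω(𝒬_{G₁}, 𝒬_{G₂}). -/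
open Pointwise Finset

/-- `Ω(𝒫,𝒬) = conv((𝒫 × {1}) ∪ (-𝒬 × {-1})) ⊆ ℝ^{d+1}`. -/
noncomputable def OmegaPoly {d : ℕ} (P Q : Set (Fin d → ℝ)) : Set (Fin (d + 1) → ℝ) :=
  convexHull ℝ
    ((fun x : Fin d → ℝ => Fin.snoc x (1 : ℝ)) '' P ∪
      (fun x : Fin d → ℝ => Fin.snoc (-x) (-1 : ℝ)) '' Q)

/-- A set `P ⊆ ℝ^N` has the integer decomposition property: every lattice point
of `nP` is a sum of `n` lattice points of `P`. -/
def hasIDP {N : ℕ} (P : Set (Fin N → ℝ)) : Prop :=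
  ∀ n : ℕ, 1 ≤ n → ∀ a : Fin N → ℤ,
    (fun i => (a i : ℝ)) ∈ (n : ℝ) • P →
      ∃ b : Fin n → Fin N → ℤ,
        (∀ k, (fun i => (b k i : ℝ)) ∈ P) ∧ ∀ i, ∑ k, b k i = a i

lemma evenCount (ℓ : ℕ) : ((Finset.range (2*ℓ)).filter (fun n => n % 2 = 0)).card = ℓ := by
  induction ℓ with
  | zero => simp
  | succ k ih =>
    have h1 : 2*(k+1) = (2*k+1)+1 := by ring
    rw [h1, Finset.range_add_one, Finset.filter_insert, if_neg (by omega),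
      Finset.range_add_one, Finset.filter_insert, if_pos (by omega),
      Finset.card_insert_of_notMem (by simp)]
    omega

lemma succ_mod_inj {m x y : ℕ} (hx : x < m) (hy : y < m)
    (h : (x+1) % m = (y+1) % m) : x = y := by
  rcases Nat.lt_or_ge (x+1) m with h1 | h1 <;> rcases Nat.lt_or_ge (y+1) m with h2 | h2
  · rw [Nat.mod_eq_of_lt h1, Nat.mod_eq_of_lt h2] at h; omega
  · have hy1 : y + 1 = m := by omega
    rw [Nat.mod_eq_of_lt h1, hy1, Nat.mod_self] at h; omega
  · have hx1 : x + 1 = m := by omega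
    rw [hx1, Nat.mod_self, Nat.mod_eq_of_lt h2] at h; omega
  · omega

lemma rho_apply {d : ℕ} (W : Set (Fin d)) (i : Fin d) [Decidable (i ∈ W)] :
    rho W i = if i ∈ W then 1 else 0 := by
  simp [rho, Set.indicator_apply]

lemma rho_empty {d : ℕ} : rho (∅ : Set (Fin d)) = 0 := by
  funext i; simp [rho]

lemma isStable_empty {d : ℕ} (G : SimpleGraph (Fin d)) : isStable G (∅ : Set (Fin d)) := by
  intro i hi; exact absurd hi (Set.notMem_empty i)

/-- The stable polytope is contained in the box + edge-inequality region. -/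
lemma stable_subset {d : ℕ} (G : SimpleGraph (Fin d)) :
    stablePolytope G ⊆ {x : Fin d → ℝ | (∀ i, 0 ≤ x i ∧ x i ≤ 1) ∧
      ∀ i j, G.Adj i j → x i + x j ≤ 1} := by
  apply convexHull_min
  · rintro x ⟨W, hW, rfl⟩
    classical
    refine ⟨fun i => ?_, fun i j hij => ?_⟩
    · rw [rho_apply]; split_ifs <;> norm_num
    · rw [rho_apply, rho_apply]
      split_ifs with h1 h2 h2 <;> try norm_num
      exact absurd hij (hW i h1 j h2 (G.ne_of_adj hij))
  · intro x hx y hy a b ha hb hab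
    refine ⟨fun i => ?_, fun i j hij => ?_⟩ <;>
      simp only [Pi.add_apply, Pi.smul_apply, smul_eq_mul]
    · constructor
      · have := (hx.1 i).1; have := (hy.1 i).1; positivity
      · nlinarith [(hx.1 i).2, (hy.1 i).2]
    · nlinarith [hx.2 i j hij, hy.2 i j hij]

lemma omega_subset_C {d : ℕ} (G₁ G₂ : SimpleGraph (Fin d)) :
    OmegaPoly (stablePolytope G₁) (stablePolytope G₂) ⊆
      {x : Fin (d+1) → ℝ |
        x (Fin.last d) ≤ 1 ∧ -1 ≤ x (Fin.last d) ∧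
        (∀ i : Fin d, -(1 - x (Fin.last d))/2 ≤ x i.castSucc ∧
          x i.castSucc ≤ (1 + x (Fin.last d))/2) ∧
        (∀ i j : Fin d, G₁.Adj i j →
          x i.castSucc + x j.castSucc ≤ (1 + x (Fin.last d))/2)} := by
  apply convexHull_min
  · rintro y (⟨x, hx, rfl⟩ | ⟨x, hx, rfl⟩)
    · have h := stable_subset G₁ hx
      refine ⟨by simp [Fin.snoc_last], by simp [Fin.snoc_last], fun i => ?_, fun i j hij => ?_⟩
      · simp only [Fin.snoc_castSucc, Fin.snoc_last]
        constructor
        · have := (h.1 i).1; linarith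
        · have := (h.1 i).2; linarith
      · simp only [Fin.snoc_castSucc, Fin.snoc_last]
        have := h.2 i j hij; linarith
    · have h := stable_subset G₂ hx
      refine ⟨by simp [Fin.snoc_last], by simp [Fin.snoc_last], fun i => ?_, fun i j hij => ?_⟩
      · simp only [Fin.snoc_castSucc, Fin.snoc_last, Pi.neg_apply]
        constructor
        · have := (h.1 i).2; linarith
        · have := (h.1 i).1; linarith
      · simp only [Fin.snoc_castSucc, Fin.snoc_last, Pi.neg_apply]
        have h1 := (h.1 i).1; have h2 := (h.1 j).1; linarith
  · intro x hx y hy a b ha hb hab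
    obtain ⟨hx1, hx2, hx3, hx4⟩ := hx
    obtain ⟨hy1, hy2, hy3, hy4⟩ := hy
    refine ⟨?_, ?_, fun i => ⟨?_, ?_⟩, fun i j hij => ?_⟩ <;>
      simp only [Pi.add_apply, Pi.smul_apply, smul_eq_mul] <;>
      [nlinarith; nlinarith; nlinarith [(hx3 i).1, (hy3 i).1];
       nlinarith [(hx3 i).2, (hy3 i).2]; nlinarith [hx4 i j hij, hy4 i j hij]]

lemma part2 {d ℓ : ℕ} (hℓ : 2 ≤ ℓ) (hd : 2 * ℓ + 1 ≤ d)
    (G₁ G₂ : SimpleGraph (Fin d))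
    (hole : ∀ i j : Fin d, (i : ℕ) < 2 * ℓ + 1 → (j : ℕ) < 2 * ℓ + 1 →
      (G₁.Adj i j ↔
        ((j : ℕ) = ((i : ℕ) + 1) % (2 * ℓ + 1) ∨
          (i : ℕ) = ((j : ℕ) + 1) % (2 * ℓ + 1)))) :
    ¬ (∃ b : Fin 3 → Fin (d + 1) → ℤ,
        (∀ k, (fun i => (b k i : ℝ)) ∈ OmegaPoly (stablePolytope G₁) (stablePolytope G₂)) ∧
        ∀ i : Fin (d + 1), ∑ k, b k i =
          (if (i : ℕ) < 2 * ℓ + 1 then 1 else if i = Fin.last d then 2 else 0 : ℤ)) := by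
  classical
  rintro ⟨b, hb, hsum⟩
  have hC := fun k => omega_subset_C G₁ G₂ (hb k)
  set t : Fin 3 → ℤ := fun k => b k (Fin.last d) with ht
  have ht1 : ∀ k, t k ≤ 1 := by
    intro k; have h := (hC k).1; simp only at h; exact_mod_cast h
  have ht2 : ∀ k, -1 ≤ t k := by
    intro k; have h := (hC k).2.1; simp only at h; exact_mod_cast h
  have hk3 : ∀ k : Fin 3, k = 0 ∨ k = 1 ∨ k = 2 := by decide
  have htsum : t 0 + t 1 + t 2 = 2 := by
    have h := hsum (Fin.last d)
    rw [if_neg (by simp [Fin.val_last]; omega), if_pos rfl] at h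
    rw [Fin.sum_univ_three] at h
    exact h
  -- value facts for hole coordinates
  have hval0 : ∀ k, t k = 0 → ∀ j : Fin d, b k j.castSucc = 0 := by
    intro k hk j
    obtain ⟨h1, h2⟩ := (hC k).2.2.1 j
    simp only at h1 h2
    rw [show b k (Fin.last d) = t k from rfl, hk] at h1 h2
    push_cast at h1 h2
    have l1' : (b k j.castSucc : ℝ) < 1 := by linarith
    have l2' : (-1 : ℝ) < (b k j.castSucc : ℝ) := by linarith
    have l1 : b k j.castSucc < 1 := by exact_mod_cast l1'
    have l2 : (-1 : ℤ) < b k j.castSucc := by exact_mod_cast l2'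
    omega
  have hval1 : ∀ k, t k = 1 → ∀ j : Fin d, b k j.castSucc = 0 ∨ b k j.castSucc = 1 := by
    intro k hk j
    obtain ⟨h1, h2⟩ := (hC k).2.2.1 j
    simp only at h1 h2
    rw [show b k (Fin.last d) = t k from rfl, hk] at h1 h2
    push_cast at h1 h2
    have l1' : (b k j.castSucc : ℝ) ≤ 1 := by linarith
    have l2' : (0 : ℝ) ≤ (b k j.castSucc : ℝ) := by linarith
    have l1 : b k j.castSucc ≤ 1 := by exact_mod_cast l1'
    have l2 : (0 : ℤ) ≤ b k j.castSucc := by exact_mod_cast l2'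
    omega
  have ht01 : ∀ k, t k = 0 ∨ t k = 1 := by
    intro k
    have a0 := ht1 0; have b0 := ht2 0; have a1 := ht1 1; have b1 := ht2 1
    have a2 := ht1 2; have b2 := ht2 2
    rcases hk3 k with rfl | rfl | rfl <;> omega
  -- per-hole-coordinate sum
  have hcoord : ∀ j : Fin d, (j : ℕ) < 2*ℓ+1 → b 0 j.castSucc + b 1 j.castSucc + b 2 j.castSucc = 1 := by
    intro j hj
    have h := hsum j.castSucc
    rw [if_pos (by simpa using hj)] at h
    rw [Fin.sum_univ_three] at h
    exact h
  have hbin : ∀ k (j : Fin d), b k j.castSucc = 0 ∨ b k j.castSucc = 1 := by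
    intro k j
    rcases ht01 k with h | h
    · exact Or.inl (hval0 k h j)
    · exact hval1 k h j
  -- Finsets
  set H : Finset (Fin d) := univ.filter (fun i : Fin d => (i:ℕ) < 2*ℓ+1) with hH
  set A : Fin 3 → Finset (Fin d) :=
    fun k => H.filter (fun i => b k i.castSucc = 1) with hA
  have hHcard : H.card = 2*ℓ+1 := by
    rw [hH]
    rw [show (univ.filter (fun i : Fin d => (i:ℕ) < 2*ℓ+1)) =
        (univ : Finset (Fin (2*ℓ+1))).map (Fin.castLEEmb hd) from ?_]
    · rw [Finset.card_map, Finset.card_univ, Fintype.card_fin]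
    · ext i
      simp only [Finset.mem_filter, Finset.mem_univ, true_and, Finset.mem_map,
        Fin.castLEEmb_apply]
      constructor
      · intro h; exact ⟨⟨(i:ℕ), h⟩, by ext; simp [Fin.castLE]⟩
      · rintro ⟨j, rfl⟩; simpa using j.2
  have hsumcard : (A 0).card + (A 1).card + (A 2).card = 2*ℓ+1 := by
    have : ∀ k : Fin 3, (A k).card = ∑ i ∈ H, (if b k i.castSucc = 1 then 1 else 0) := by
      intro k; rw [hA]; rw [Finset.card_filter]
    rw [this 0, this 1, this 2, ← Finset.sum_add_distrib, ← Finset.sum_add_distrib]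
    rw [show ∑ i ∈ H, ((if b 0 i.castSucc = 1 then 1 else 0) +
        (if b 1 i.castSucc = 1 then 1 else 0) + (if b 2 i.castSucc = 1 then 1 else 0)) =
        ∑ i ∈ H, 1 from ?_]
    · rw [Finset.sum_const, smul_eq_mul, mul_one, hHcard]
    · apply Finset.sum_congr rfl
      intro i hi
      have hilt : (i:ℕ) < 2*ℓ+1 := by simpa [hH] using hi
      have h0 := hbin 0 i; have h1 := hbin 1 i; have h2 := hbin 2 i
      have hc := hcoord i hilt
      split_ifs <;> omega
  have hbound : ∀ k, t k = 1 → (A k).card ≤ ℓ := by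
    intro k hk
    have hsub : A k ⊆ H := Finset.filter_subset _ _
    -- successor map
    have key : (A k).card ≤ (H \ A k).card := by
      refine Finset.card_le_card_of_injOn
        (fun i => (⟨((i:ℕ)+1) % (2*ℓ+1), lt_of_lt_of_le (Nat.mod_lt _ (by omega)) hd⟩ : Fin d)) ?_ ?_
      · intro i hi
        simp only [hA, hH, Finset.mem_coe, Finset.mem_filter, Finset.mem_univ, true_and] at hi
        obtain ⟨hilt, hib⟩ := hi
        have hjlt : ((i:ℕ)+1) % (2*ℓ+1) < 2*ℓ+1 := Nat.mod_lt _ (by omega)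
        rw [Finset.mem_coe, Finset.mem_sdiff]
        refine ⟨by simp [hH]; omega, ?_⟩
        intro hmem
        simp only [hA, hH, Finset.mem_filter, Finset.mem_univ, true_and] at hmem
        obtain ⟨-, hjb⟩ := hmem
        have hadj : G₁.Adj i (⟨((i:ℕ)+1) % (2*ℓ+1), lt_of_lt_of_le hjlt hd⟩ : Fin d) :=
          (hole i ⟨((i:ℕ)+1) % (2*ℓ+1), lt_of_lt_of_le hjlt hd⟩ hilt hjlt).mpr (Or.inl rfl)
        have hjb' : b k ((⟨((i:ℕ)+1) % (2*ℓ+1), lt_of_lt_of_le hjlt hd⟩ : Fin d)).castSucc = 1 := hjb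
        have hE := (hC k).2.2.2 i _ hadj
        simp only at hE
        rw [show b k (Fin.last d) = t k from rfl, hk, hib, hjb'] at hE
        norm_num at hE
      · intro i hi j hj hij
        simp only [hA, hH, Finset.mem_coe, Finset.mem_filter, Finset.mem_univ, true_and] at hi hj
        have : ((i:ℕ)+1) % (2*ℓ+1) = ((j:ℕ)+1) % (2*ℓ+1) := congrArg Fin.val hij
        exact Fin.ext (succ_mod_inj hi.1 hj.1 this)
    have : (H \ A k).card = H.card - (A k).card := Finset.card_sdiff_of_subset hsub
    have hle : (A k).card ≤ H.card := Finset.card_le_card hsub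
    omega
  have hempty : ∀ k, t k = 0 → (A k).card = 0 := by
    intro k hk
    rw [Finset.card_eq_zero, hA]
    rw [Finset.filter_eq_empty_iff]
    intro i hi
    rw [hval0 k hk i]
    omega
  have hzero : t 0 = 0 ∨ t 1 = 0 ∨ t 2 = 0 := by
    have := ht01 0; have := ht01 1; have := ht01 2; omega
  rcases hzero with h | h | h
  · have := hempty 0 h
    have h1 : t 1 = 1 := by have := ht01 1; have := ht01 2; omega
    have h2 : t 2 = 1 := by have := ht01 1; have := ht01 2; omega
    have := hbound 1 h1; have := hbound 2 h2; omega
  · have := hempty 1 h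
    have h1 : t 0 = 1 := by have := ht01 0; have := ht01 2; omega
    have h2 : t 2 = 1 := by have := ht01 0; have := ht01 2; omega
    have := hbound 0 h1; have := hbound 2 h2; omega
  · have := hempty 2 h
    have h1 : t 0 = 1 := by have := ht01 0; have := ht01 1; omega
    have h2 : t 1 = 1 := by have := ht01 0; have := ht01 1; omega
    have := hbound 0 h1; have := hbound 1 h2; omega

lemma part1 {d ℓ : ℕ} (hℓ : 2 ≤ ℓ) (hd : 2 * ℓ + 1 ≤ d)
    (G₁ G₂ : SimpleGraph (Fin d))
    (hole : ∀ i j : Fin d, (i : ℕ) < 2 * ℓ + 1 → (j : ℕ) < 2 * ℓ + 1 →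
      (G₁.Adj i j ↔
        ((j : ℕ) = ((i : ℕ) + 1) % (2 * ℓ + 1) ∨
          (i : ℕ) = ((j : ℕ) + 1) % (2 * ℓ + 1)))) :
    (fun i : Fin (d + 1) =>
        ((if (i : ℕ) < 2 * ℓ + 1 then 1 else if i = Fin.last d then 2 else 0 : ℤ) : ℝ)) ∈
        (3 : ℝ) • OmegaPoly (stablePolytope G₁) (stablePolytope G₂) := by
  classical
  haveI : NeZero (2*ℓ+1) := ⟨by omega⟩
  haveI : Fact (1 < 2*ℓ+1) := ⟨by omega⟩
  have hlR : (2:ℝ) ≤ (ℓ:ℝ) := by exact_mod_cast hℓ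
  -- rotated stable sets
  set S : ZMod (2*ℓ+1) → Set (Fin d) := fun s =>
    {v : Fin d | (v:ℕ) < 2*ℓ+1 ∧ (((v:ℕ) : ZMod (2*ℓ+1)) + s).val % 2 = 0 ∧
      (((v:ℕ) : ZMod (2*ℓ+1)) + s).val < 2*ℓ} with hS
  have hstab : ∀ s, isStable G₁ (S s) := by
    have key : ∀ s, ∀ x y : Fin d, (x:ℕ) < 2*ℓ+1 → (y:ℕ) < 2*ℓ+1 →
        (y:ℕ) = ((x:ℕ)+1) % (2*ℓ+1) →
        (((x:ℕ) : ZMod (2*ℓ+1)) + s).val % 2 = 0 →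
        (((x:ℕ) : ZMod (2*ℓ+1)) + s).val < 2*ℓ →
        (((y:ℕ) : ZMod (2*ℓ+1)) + s).val % 2 = 0 → False := by
      intro s x y hx hy hxy hx2 hx3 hy2
      set u : ZMod (2*ℓ+1) := ((x:ℕ) : ZMod (2*ℓ+1)) + s with hu
      have hcast : ((y:ℕ) : ZMod (2*ℓ+1)) + s = u + 1 := by
        rw [hxy, ZMod.natCast_mod]
        push_cast
        ring
      have hval : (u + 1).val = u.val + 1 := by
        rw [ZMod.val_add, ZMod.val_one]
        exact Nat.mod_eq_of_lt (by omega)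
      rw [hcast, hval] at hy2
      omega
    intro s i hi j hj hne hadj
    obtain ⟨hi1, hi2, hi3⟩ := hi
    obtain ⟨hj1, hj2, hj3⟩ := hj
    rcases (hole i j hi1 hj1).mp hadj with h | h
    · exact key s i j hi1 hj1 h hi2 hi3 hj2
    · exact key s j i hj1 hi1 h hj2 hj3 hi2
  -- counting
  have hcount : ∀ c : ZMod (2*ℓ+1),
      ((univ : Finset (ZMod (2*ℓ+1))).filter
        (fun s => (c + s).val % 2 = 0 ∧ (c + s).val < 2*ℓ)).card = ℓ := by
    intro c
    refine Eq.trans ?_ (evenCount ℓ)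
    apply Finset.card_bij' (fun s _ => (c + s).val)
      (fun n _ => ((n : ZMod (2*ℓ+1)) - c))
    · intro s hs
      simp only [Finset.mem_filter, Finset.mem_univ, true_and] at hs
      simp only [Finset.mem_filter, Finset.mem_range]
      exact ⟨hs.2, hs.1⟩
    · intro n hn
      simp only [Finset.mem_filter, Finset.mem_range] at hn
      simp only [Finset.mem_filter, Finset.mem_univ, true_and]
      have : c + ((n : ZMod (2*ℓ+1)) - c) = (n : ZMod (2*ℓ+1)) := by ring
      rw [this, ZMod.val_cast_of_lt (by omega)]
      exact ⟨hn.2, hn.1⟩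
    · intro s hs
      have : ((( c + s).val : ℕ) : ZMod (2*ℓ+1)) = c + s := ZMod.natCast_rightInverse _
      rw [this]; ring
    · intro n hn
      simp only [Finset.mem_filter, Finset.mem_range] at hn
      have : c + ((n : ZMod (2*ℓ+1)) - c) = (n : ZMod (2*ℓ+1)) := by ring
      rw [this, ZMod.val_cast_of_lt (by omega)]
  -- the convex combination
  set w : ZMod (2*ℓ+1) ⊕ Bool → ℝ := fun x =>
    Sum.elim (fun _ => 1/(3*(ℓ:ℝ)))
      (fun b => if b then 1/6 else ((ℓ:ℝ)-2)/(6*(ℓ:ℝ))) x with hw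
  set z : ZMod (2*ℓ+1) ⊕ Bool → Fin (d+1) → ℝ := fun x =>
    Sum.elim (fun s => Fin.snoc (rho (S s)) (1:ℝ))
      (fun b => if b then Fin.snoc (-(rho (∅ : Set (Fin d)))) (-1:ℝ)
        else Fin.snoc (rho (∅ : Set (Fin d))) (1:ℝ)) x with hz
  rw [Set.mem_smul_set_iff_inv_smul_mem₀ (by norm_num : (3:ℝ) ≠ 0)]
  unfold OmegaPoly
  have hmain : (3:ℝ)⁻¹ • (fun i : Fin (d + 1) =>
      ((if (i : ℕ) < 2 * ℓ + 1 then 1 else if i = Fin.last d then 2 else 0 : ℤ) : ℝ)) =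
      ∑ x : ZMod (2*ℓ+1) ⊕ Bool, w x • z x := by
    funext i
    rw [Finset.sum_apply]
    simp only [Pi.smul_apply, smul_eq_mul]
    induction i using Fin.lastCases with
    | last =>
      have hlast : ∀ x, z x (Fin.last d) = Sum.elim (fun _ : ZMod (2*ℓ+1) => (1:ℝ))
          (fun b => if b then (-1:ℝ) else 1) x := by
        rintro (s | b)
        · simp [hz, Fin.snoc_last]
        · cases b <;> simp [hz, Fin.snoc_last]
      rw [Finset.sum_congr rfl (fun x _ => by rw [hlast x])]
      rw [Fintype.sum_sum_type]
      simp only [Sum.elim_inl, Sum.elim_inr, hw]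
      rw [Finset.sum_const, Finset.card_univ, ZMod.card]
      rw [Fintype.sum_bool]
      simp only [if_pos, if_neg, Bool.false_eq_true, if_false, if_true]
      rw [if_neg (by simp [Fin.val_last]; omega)]
      have h0 : (ℓ:ℝ) ≠ 0 := by linarith
      rw [nsmul_eq_mul]
      push_cast
      field_simp
      ring
    | cast j =>
      have hc : ∀ s : ZMod (2*ℓ+1), z (Sum.inl s) j.castSucc = rho (S s) j := by
        intro s; simp [hz, Fin.snoc_castSucc]
      have hb : ∀ b : Bool, z (Sum.inr b) j.castSucc = 0 := by
        intro b; cases b <;> simp [hz, Fin.snoc_castSucc, rho_empty]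
      rw [Fintype.sum_sum_type]
      rw [show (∑ b : Bool, w (Sum.inr b) * z (Sum.inr b) j.castSucc) = 0 by
        rw [Fintype.sum_bool, hb true, hb false]; simp]
      rw [add_zero]
      have hrw : ∀ s : ZMod (2*ℓ+1), w (Sum.inl s) * z (Sum.inl s) j.castSucc =
          (1/(3*(ℓ:ℝ))) * (if ((j:ℕ) < 2*ℓ+1 ∧
            ((((j:ℕ)) : ZMod (2*ℓ+1)) + s).val % 2 = 0 ∧
            ((((j:ℕ)) : ZMod (2*ℓ+1)) + s).val < 2*ℓ) then 1 else 0) := by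
        intro s
        rw [hc s, rho_apply]
        simp only [hw, Sum.elim_inl]
        congr 1
      rw [Finset.sum_congr rfl (fun s _ => hrw s), ← Finset.mul_sum]
      have hcast : ((j.castSucc : Fin (d+1)) : ℕ) = (j:ℕ) := Fin.coe_castSucc j
      by_cases hjm : (j:ℕ) < 2*ℓ+1
      · rw [if_pos (by rwa [hcast])]
        have : ∑ s : ZMod (2*ℓ+1), (if ((j:ℕ) < 2*ℓ+1 ∧
            ((((j:ℕ)) : ZMod (2*ℓ+1)) + s).val % 2 = 0 ∧
            ((((j:ℕ)) : ZMod (2*ℓ+1)) + s).val < 2*ℓ) then (1:ℝ) else 0) =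
            ((univ.filter (fun s : ZMod (2*ℓ+1) =>
              ((((j:ℕ)) : ZMod (2*ℓ+1)) + s).val % 2 = 0 ∧
              ((((j:ℕ)) : ZMod (2*ℓ+1)) + s).val < 2*ℓ)).card : ℝ) := by
          rw [Finset.card_filter]
          push_cast
          apply Finset.sum_congr rfl
          intro s _
          simp [hjm]
        rw [this, hcount ((j:ℕ) : ZMod (2*ℓ+1))]
        have h0 : (ℓ:ℝ) ≠ 0 := by linarith
        push_cast
        field_simp
      · rw [if_neg (by rwa [hcast]), if_neg (by simp [Fin.ext_iff, Fin.val_last]; omega)]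
        rw [show ∑ s : ZMod (2*ℓ+1), (if ((j:ℕ) < 2*ℓ+1 ∧
            ((((j:ℕ)) : ZMod (2*ℓ+1)) + s).val % 2 = 0 ∧
            ((((j:ℕ)) : ZMod (2*ℓ+1)) + s).val < 2*ℓ) then (1:ℝ) else 0) = 0 by
          apply Finset.sum_eq_zero; intro s _; rw [if_neg (by tauto)]]
        norm_num
  rw [hmain]
  apply Convex.sum_mem (convex_convexHull ℝ _)
  · rintro (s | b) -
    · simp only [hw, Sum.elim_inl]
      have h0 : (0:ℝ) < (ℓ:ℝ) := by linarith
      positivity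
    · simp only [hw, Sum.elim_inr]
      cases b <;> simp only [if_true, if_false, Bool.false_eq_true]
      · apply div_nonneg (by linarith) (by linarith)
      · norm_num
  · rw [Fintype.sum_sum_type]
    simp only [hw, Sum.elim_inl, Sum.elim_inr]
    rw [Finset.sum_const, Finset.card_univ, ZMod.card, Fintype.sum_bool]
    simp only [if_true, if_false, Bool.false_eq_true]
    have h0 : (ℓ:ℝ) ≠ 0 := by linarith
    rw [nsmul_eq_mul]
    push_cast
    field_simp
    ring
  · rintro (s | b) -
    · refine subset_convexHull ℝ _ ?_
      simp only [hz, Sum.elim_inl]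
      exact Set.mem_union_left _ ⟨rho (S s), subset_convexHull ℝ _ ⟨S s, hstab s, rfl⟩, rfl⟩
    · refine subset_convexHull ℝ _ ?_
      simp only [hz, Sum.elim_inr]
      cases b <;> simp only [if_true, if_false, Bool.false_eq_true]
      · exact Set.mem_union_left _ ⟨rho (∅ : Set (Fin d)),
          subset_convexHull ℝ _ ⟨∅, isStable_empty G₁, rfl⟩, rfl⟩
      · exact Set.mem_union_right _ ⟨rho (∅ : Set (Fin d)),
          subset_convexHull ℝ _ ⟨∅, isStable_empty G₂, rfl⟩, rfl⟩

/-- If `G₁` contains an odd hole (an induced cycle of odd length `2ℓ+1 ≥ 5`, here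
on the first `2ℓ+1` vertices), then `Ω(𝒬_{G₁}, 𝒬_{G₂})` does not possess the
integer decomposition property: the point
`a = e₁ + ⋯ + e_{2ℓ+1} + 2 e_{d+1}` lies in `3·Ω(𝒬_{G₁}, 𝒬_{G₂}) ∩ ℤ^{d+1}`
but is not a sum of three lattice points of `Ω(𝒬_{G₁}, 𝒬_{G₂})`. -/
theorem stmt_9 {d ℓ : ℕ} (hℓ : 2 ≤ ℓ) (hd : 2 * ℓ + 1 ≤ d)
    (G₁ G₂ : SimpleGraph (Fin d))
    (hole : ∀ i j : Fin d, (i : ℕ) < 2 * ℓ + 1 → (j : ℕ) < 2 * ℓ + 1 →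
      (G₁.Adj i j ↔
        ((j : ℕ) = ((i : ℕ) + 1) % (2 * ℓ + 1) ∨
          (i : ℕ) = ((j : ℕ) + 1) % (2 * ℓ + 1)))) :
    (fun i : Fin (d + 1) =>
        ((if (i : ℕ) < 2 * ℓ + 1 then 1 else if i = Fin.last d then 2 else 0 : ℤ) : ℝ)) ∈
        (3 : ℝ) • OmegaPoly (stablePolytope G₁) (stablePolytope G₂) ∧
    ¬ (∃ b : Fin 3 → Fin (d + 1) → ℤ,
        (∀ k, (fun i => (b k i : ℝ)) ∈ OmegaPoly (stablePolytope G₁) (stablePolytope G₂)) ∧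
        ∀ i : Fin (d + 1), ∑ k, b k i =
          (if (i : ℕ) < 2 * ℓ + 1 then 1 else if i = Fin.last d then 2 else 0 : ℤ)) ∧
    ¬ hasIDP (OmegaPoly (stablePolytope G₁) (stablePolytope G₂)) := by
  refine ⟨part1 hℓ hd G₁ G₂ hole, part2 hℓ hd G₁ G₂ hole, ?_⟩
  intro hIDP
  apply part2 hℓ hd G₁ G₂ hole
  obtain ⟨b, hb1, hb2⟩ := hIDP 3 (by norm_num)
    (fun i : Fin (d+1) =>
      (if (i : ℕ) < 2 * ℓ + 1 then 1 else if i = Fin.last d then 2 else 0 : ℤ)) (by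
        have h := part1 hℓ hd G₁ G₂ hole
        have h3 : ((3:ℕ):ℝ) = (3:ℝ) := by norm_num
        rw [h3]
        exact h)
  exact ⟨b, hb1, hb2⟩
end
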